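/- Let D_U and D_V be Born-rule distributions from unit vectors φ(U)ψ and φ(V)ψ where U, V are unitary, ψ a unit vector, and φ satisfies ‖φ(U) − φ(V)‖ ≤ n‖U − V‖_op (taking k = 1 since ‖U‖ = ‖V‖ = 1). Then ‖D_U − D_V‖_TV ≤ n·‖U − V‖_op. -/

import Mathlib

open scoped Matrix.Norms.L2Operator

lemma parseval_aux {N : ℕ} (b : OrthonormalBasis (Fin N) ℂ (EuclideanSpace ℂ (Fin N)))
    (w : EuclideanSpace ℂ (Fin N)) :
    ∑ x : Fin N, ‖(inner ℂ (b x) w : ℂ)‖ ^ 2 = ‖w‖ ^ 2 := by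
  have h := b.repr.norm_map w
  have h2 : ‖b.repr w‖ ^ 2 = ∑ x : Fin N, ‖b.repr w x‖ ^ 2 := by
    rw [EuclideanSpace.norm_eq, Real.sq_sqrt]
    positivity
  rw [← h, h2]
  simp [OrthonormalBasis.repr_apply_apply]

/-- Arkhipov's bound: for unitaries `U, V`, an isometric (on unitaries) representation `φ`
satisfying `‖φ(U) − φ(V)‖ ≤ n·‖U − V‖_op`, and a unit input state `ψ`, the total variation
distance between the Born-rule distributions of `φ(U)ψ` and `φ(V)ψ` in an orthonormal
basis `{e_x}` is at most `n·‖U − V‖_op`. -/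
theorem arkhipov_tv_bound {m N n : ℕ}
    (φ : Matrix (Fin m) (Fin m) ℂ → (EuclideanSpace ℂ (Fin N) →L[ℂ] EuclideanSpace ℂ (Fin N)))
    (U V : Matrix (Fin m) (Fin m) ℂ)
    (hU : U ∈ Matrix.unitaryGroup (Fin m) ℂ) (hV : V ∈ Matrix.unitaryGroup (Fin m) ℂ)
    (hiso : ∀ M ∈ Matrix.unitaryGroup (Fin m) ℂ,
      ∀ v : EuclideanSpace ℂ (Fin N), ‖φ M v‖ = ‖v‖)
    (hlip : ‖φ U - φ V‖ ≤ (n : ℝ) * ‖U - V‖)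
    (ψ : EuclideanSpace ℂ (Fin N)) (hψ : ‖ψ‖ = 1)
    (b : OrthonormalBasis (Fin N) ℂ (EuclideanSpace ℂ (Fin N))) :
    (1 / 2) * ∑ x : Fin N,
        |‖(inner ℂ (b x) (φ U ψ) : ℂ)‖ ^ 2 - ‖(inner ℂ (b x) (φ V ψ) : ℂ)‖ ^ 2|
      ≤ (n : ℝ) * ‖U - V‖ := by
  set u := φ U ψ with hu'
  set v := φ V ψ with hv'
  have hu : ‖u‖ = 1 := by rw [hu', hiso U hU, hψ]
  have hv : ‖v‖ = 1 := by rw [hv', hiso V hV, hψ]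
  set t := ‖u - v‖ with ht'
  have htle : t ≤ (n : ℝ) * ‖U - V‖ := by
    have : u - v = (φ U - φ V) ψ := by simp [hu', hv']
    calc t = ‖(φ U - φ V) ψ‖ := by rw [ht', this]
      _ ≤ ‖φ U - φ V‖ * ‖ψ‖ := (φ U - φ V).le_opNorm ψ
      _ ≤ (n : ℝ) * ‖U - V‖ := by rw [hψ, mul_one]; exact hlip
  set au : Fin N → ℝ := fun x => ‖(inner ℂ (b x) u : ℂ)‖ with hau
  set av : Fin N → ℝ := fun x => ‖(inner ℂ (b x) v : ℂ)‖ with hav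
  set d : Fin N → ℝ := fun x => ‖(inner ℂ (b x) (u - v) : ℂ)‖ with hd
  have hsum_u : ∑ x, au x ^ 2 = 1 := by
    simp only [hau]; rw [parseval_aux b u, hu, one_pow]
  have hsum_v : ∑ x, av x ^ 2 = 1 := by
    simp only [hav]; rw [parseval_aux b v, hv, one_pow]
  have hsum_d : ∑ x, d x ^ 2 = t ^ 2 := by
    simp only [hd]; rw [parseval_aux b (u - v), ht']
  -- pointwise bound
  have hpt : ∀ x, |au x ^ 2 - av x ^ 2| ≤ d x * (au x + av x) := by
    intro x
    have h1 : |au x - av x| ≤ d x := by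
      have := abs_norm_sub_norm_le (inner ℂ (b x) u : ℂ) (inner ℂ (b x) v : ℂ)
      rwa [← inner_sub_right] at this
    calc |au x ^ 2 - av x ^ 2| = |au x - av x| * |au x + av x| := by
          rw [← abs_mul]; ring_nf
      _ ≤ d x * (au x + av x) := by
          apply mul_le_mul h1 (le_of_eq (abs_of_nonneg (by positivity))) (abs_nonneg _)
          exact norm_nonneg _
  have hsum1 : ∑ x, |au x ^ 2 - av x ^ 2| ≤ ∑ x, d x * (au x + av x) :=
    Finset.sum_le_sum fun x _ => hpt x
  -- Cauchy-Schwarz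
  have hcs : (∑ x, d x * (au x + av x)) ^ 2 ≤
      (∑ x, d x ^ 2) * (∑ x, (au x + av x) ^ 2) :=
    Finset.sum_mul_sq_le_sq_mul_sq Finset.univ d (fun x => au x + av x)
  have hquad : ∑ x, (au x + av x) ^ 2 ≤ 4 := by
    have : ∀ x : Fin N, (au x + av x) ^ 2 ≤ 2 * au x ^ 2 + 2 * av x ^ 2 := by
      intro x; nlinarith [sq_nonneg (au x - av x)]
    calc ∑ x, (au x + av x) ^ 2 ≤ ∑ x, (2 * au x ^ 2 + 2 * av x ^ 2) :=
          Finset.sum_le_sum fun x _ => this x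
      _ = 4 := by rw [Finset.sum_add_distrib, ← Finset.mul_sum, ← Finset.mul_sum,
          hsum_u, hsum_v]; ring
  have hsum2 : (∑ x, d x * (au x + av x)) ^ 2 ≤ (2 * t) ^ 2 := by
    calc (∑ x, d x * (au x + av x)) ^ 2 ≤ (∑ x, d x ^ 2) * (∑ x, (au x + av x) ^ 2) := hcs
      _ ≤ t ^ 2 * 4 := by
          rw [hsum_d]
          exact mul_le_mul_of_nonneg_left hquad (by positivity)
      _ = (2 * t) ^ 2 := by ring
  have ht0 : 0 ≤ t := norm_nonneg _
  have hsnn : 0 ≤ ∑ x, d x * (au x + av x) :=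
    Finset.sum_nonneg fun x _ => mul_nonneg (norm_nonneg _)
      (add_nonneg (norm_nonneg _) (norm_nonneg _))
  have hsum3 : ∑ x, d x * (au x + av x) ≤ 2 * t := by
    nlinarith
  calc (1 / 2) * ∑ x : Fin N, |au x ^ 2 - av x ^ 2|
      ≤ (1 / 2) * (2 * t) := by
        apply mul_le_mul_of_nonneg_left (le_trans hsum1 hsum3) (by norm_num)
    _ = t := by ring
    _ ≤ (n : ℝ) * ‖U - V‖ := htle
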